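/- Let g be a random variable on (Ω, F, P) with E[exp(r·g)] < ∞ for all r ∈ ℝ, and let U be a utility function with bounded absolute risk aversion: c₁ < -U'(x)/U''(x) < c₂ for all x, with c₁, c₂ > 0. Then for every x ∈ ℝ the equation E[(p - g)·U'(x + p - g)] = 0 has at least one solution p ∈ ℝ. -/

import Mathlib

open MeasureTheory Real

/-!
Put `V = U'` and `K = 1 / c₁`. The lower risk-aversion bound says `|V'| ≤ K V`, so `log V` is
`K`-Lipschitz and `e^{-K|y|} V t ≤ V (t - y) ≤ e^{K|y|} V t`. Writing `(p - y) V(t - y) =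
p V(t - y) - y V(t - y)` with `t = x + p`, this gives for `p ≥ 0`
`α(p) ≥ V(x + p) (p E[e^{-K|g|}] - E[|g| e^{K|g|}])`, and the mirror bound for `p ≤ 0`; both
expectations are finite by the exponential moments of `g`. Hence `α` changes sign on `[-R, R]`
for `R` large, and it is continuous by dominated convergence, so it has a zero.
-/

theorem abs_le_inv_mul_of_lt_neg_div {v w c : ℝ} (hv : 0 < v) (hc : 0 < c) (h : c < -(v / w)) :
    |w| ≤ c⁻¹ * v := by
  rcases lt_trichotomy w 0 with hw | rfl | hw
  · rw [abs_of_neg hw, ← div_eq_inv_mul, le_div_iff₀ hc]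
    rw [← div_neg, lt_div_iff₀ (neg_pos.2 hw)] at h
    linarith
  · rw [div_zero, neg_zero] at h; linarith
  · linarith [div_pos hv hw]

theorem le_mul_exp_abs_sub_of_abs_deriv_le {V : ℝ → ℝ} {K : ℝ} (hV : Differentiable ℝ V)
    (hpos : ∀ t, 0 < V t) (hK : ∀ t, |deriv V t| ≤ K * V t) (s t : ℝ) :
    V s ≤ V t * exp (K * |s - t|) := by
  have hlog : ∀ t, HasDerivAt (fun t => log (V t)) (deriv V t / V t) t :=
    fun t => (hV t).hasDerivAt.log (hpos t).ne'
  have hlip := convex_univ.norm_image_sub_le_of_norm_deriv_le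
    (fun t _ => (hlog t).differentiableAt)
    (fun t _ => by
      rw [(hlog t).deriv, norm_div, Real.norm_eq_abs, Real.norm_of_nonneg (hpos t).le,
        div_le_iff₀ (hpos t)]
      exact hK t)
    (Set.mem_univ t) (Set.mem_univ s)
  rw [Real.norm_eq_abs, Real.norm_eq_abs] at hlip
  calc V s = V t * exp (log (V s) - log (V t)) := by
        rw [exp_sub, exp_log (hpos s), exp_log (hpos t), mul_div_cancel₀ _ (hpos t).ne']
    _ ≤ V t * exp (K * |s - t|) := by
        gcongr
        · exact (hpos t).le
        · exact (le_abs_self _).trans hlip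

section Moments

variable {Ω : Type*} [MeasurableSpace Ω] {μ : Measure Ω} {g : Ω → ℝ}

theorem integrable_exp_mul_abs (hg : Measurable g)
    (hexp : ∀ r : ℝ, Integrable (fun ω => exp (r * g ω)) μ) (r : ℝ) :
    Integrable (fun ω => exp (r * |g ω|)) μ := by
  refine ((hexp r).add (hexp (-r))).mono (by fun_prop) (ae_of_all _ fun ω => ?_)
  rw [Pi.add_apply, Real.norm_of_nonneg (exp_pos _).le, Real.norm_of_nonneg (by positivity)]
  rcases abs_choice (g ω) with h | h <;> rw [h]
  · linarith [exp_pos (-r * g ω)]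
  · rw [mul_neg, ← neg_mul]; linarith [exp_pos (r * g ω)]

theorem integrable_abs_mul_exp_mul_abs (hg : Measurable g)
    (hexp : ∀ r : ℝ, Integrable (fun ω => exp (r * g ω)) μ) (r : ℝ) :
    Integrable (fun ω => |g ω| * exp (r * |g ω|)) μ := by
  refine (integrable_exp_mul_abs hg hexp (1 + r)).mono (by fun_prop) (ae_of_all _ fun ω => ?_)
  rw [Real.norm_of_nonneg (by positivity), Real.norm_of_nonneg (exp_pos _).le, add_mul, one_mul,
    exp_add]
  gcongr
  linarith [add_one_le_exp |g ω|]

theorem integrable_add_abs_mul_exp_mul_abs (hg : Measurable g)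
    (hexp : ∀ r : ℝ, Integrable (fun ω => exp (r * g ω)) μ) (R r : ℝ) :
    Integrable (fun ω => (R + |g ω|) * exp (r * |g ω|)) μ := by
  simp_rw [add_mul]
  exact ((integrable_exp_mul_abs hg hexp r).const_mul R).add
    (integrable_abs_mul_exp_mul_abs hg hexp r)

end Moments

section LogLipschitz

variable {V : ℝ → ℝ} {K : ℝ}

theorem mul_exp_neg_mul_abs_le (hV : ∀ s t, V s ≤ V t * exp (K * |s - t|)) (t y : ℝ) :
    V t * exp (-(K * |y|)) ≤ V (t - y) := by
  have h := hV t (t - y)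
  rw [sub_sub_cancel] at h
  rw [exp_neg, ← div_eq_mul_inv, div_le_iff₀ (exp_pos _)]
  exact h

theorem le_mul_exp_mul_abs (hV : ∀ s t, V s ≤ V t * exp (K * |s - t|)) (t y : ℝ) :
    V (t - y) ≤ V t * exp (K * |y|) := by
  simpa [abs_neg] using hV (t - y) t

theorem mul_sub_le_sub_mul_of_nonneg (hpos : ∀ t, 0 < V t)
    (hV : ∀ s t, V s ≤ V t * exp (K * |s - t|)) {p : ℝ} (hp : 0 ≤ p) (t y : ℝ) :
    V t * (p * exp (-(K * |y|)) - |y| * exp (K * |y|)) ≤ (p - y) * V (t - y) := by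
  have hlow := mul_le_mul_of_nonneg_left (mul_exp_neg_mul_abs_le hV t y) hp
  have hup := mul_le_mul_of_nonneg_left (le_mul_exp_mul_abs hV t y) (abs_nonneg y)
  have hy := mul_le_mul_of_nonneg_right (le_abs_self y) (hpos (t - y)).le
  linarith

theorem sub_mul_le_mul_add_of_nonpos (hpos : ∀ t, 0 < V t)
    (hV : ∀ s t, V s ≤ V t * exp (K * |s - t|)) {p : ℝ} (hp : p ≤ 0) (t y : ℝ) :
    (p - y) * V (t - y) ≤ V t * (p * exp (-(K * |y|)) + |y| * exp (K * |y|)) := by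
  have hlow := mul_le_mul_of_nonpos_left (mul_exp_neg_mul_abs_le hV t y) hp
  have hup := mul_le_mul_of_nonneg_left (le_mul_exp_mul_abs hV t y) (abs_nonneg y)
  have hy := mul_le_mul_of_nonneg_right (neg_le_abs y) (hpos (t - y)).le
  linarith

theorem abs_sub_mul_le (hK : 0 ≤ K) (hpos : ∀ t, 0 < V t)
    (hV : ∀ s t, V s ≤ V t * exp (K * |s - t|))
    {p R : ℝ} (hp : |p| ≤ R) (x y : ℝ) :
    |(p - y) * V (x + p - y)| ≤ V x * exp (K * R) * ((R + |y|) * exp (K * |y|)) := by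
  have hpy : |p - y| ≤ R + |y| := (abs_sub p y).trans (by linarith)
  have hVle : V (x + p - y) ≤ V x * exp (K * R) * exp (K * |y|) := by
    calc V (x + p - y) ≤ V x * exp (K * |p - y|) := by
          simpa [add_sub_assoc] using hV (x + p - y) x
      _ ≤ V x * exp (K * (R + |y|)) := by gcongr; exact (hpos x).le
      _ = V x * exp (K * R) * exp (K * |y|) := by rw [mul_add, exp_add, mul_assoc]
  have hR : 0 ≤ R := (abs_nonneg p).trans hp
  rw [abs_mul, abs_of_pos (hpos _)]
  calc |p - y| * V (x + p - y) ≤ (R + |y|) * (V x * exp (K * R) * exp (K * |y|)) :=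
        mul_le_mul hpy hVle (hpos _).le (by positivity)
    _ = V x * exp (K * R) * ((R + |y|) * exp (K * |y|)) := by ring

end LogLipschitz

/-- The paper's `α`, with the marginal utility `U'` replaced by a general `V`. -/
noncomputable def marginalGap {Ω : Type*} [MeasurableSpace Ω] (μ : Measure Ω) (V : ℝ → ℝ)
    (x : ℝ) (g : Ω → ℝ) (p : ℝ) : ℝ :=
  ∫ ω, (p - g ω) * V (x + p - g ω) ∂μ

section MarginalGap

variable {Ω : Type*} [MeasurableSpace Ω] {μ : Measure Ω} {g : Ω → ℝ} {V : ℝ → ℝ} {K : ℝ}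

theorem aestronglyMeasurable_sub_mul (hVc : Continuous V) (hg : Measurable g) (x p : ℝ) :
    AEStronglyMeasurable (fun ω => (p - g ω) * V (x + p - g ω)) μ := by
  have := hVc.measurable
  fun_prop

variable (hVc : Continuous V) (hpos : ∀ t, 0 < V t) (hK : 0 ≤ K)
  (hV : ∀ s t, V s ≤ V t * exp (K * |s - t|)) (hg : Measurable g)
  (hexp : ∀ r : ℝ, Integrable (fun ω => exp (r * g ω)) μ)
include hVc hpos hK hV hg hexp

theorem integrable_sub_mul (x p : ℝ) :
    Integrable (fun ω => (p - g ω) * V (x + p - g ω)) μ :=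
  ((integrable_add_abs_mul_exp_mul_abs hg hexp |p| K).const_mul _).mono'
    (aestronglyMeasurable_sub_mul hVc hg x p)
    (ae_of_all _ fun ω => abs_sub_mul_le hK hpos hV le_rfl x (g ω))

theorem continuousOn_marginalGap (x R : ℝ) :
    ContinuousOn (marginalGap μ V x g) (Set.Icc (-R) R) :=
  continuousOn_of_dominated (fun p _ => aestronglyMeasurable_sub_mul hVc hg x p)
    (fun _ hp => ae_of_all _ fun ω => abs_sub_mul_le hK hpos hV (abs_le.2 hp) x (g ω))
    ((integrable_add_abs_mul_exp_mul_abs hg hexp R K).const_mul _)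
    (ae_of_all _ fun _ => by fun_prop)

theorem mul_le_marginalGap (x : ℝ) {p : ℝ} (hp : 0 ≤ p) :
    V (x + p) * (p * ∫ ω, exp (-(K * |g ω|)) ∂μ - ∫ ω, |g ω| * exp (K * |g ω|) ∂μ) ≤
      marginalGap μ V x g p := by
  have hw := integrable_exp_mul_abs hg hexp (-K)
  have hW := integrable_abs_mul_exp_mul_abs hg hexp K
  simp only [neg_mul] at hw
  rw [← integral_const_mul, ← integral_sub (hw.const_mul p) hW, ← integral_const_mul]
  exact integral_mono (((hw.const_mul p).sub hW).const_mul _)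
    (integrable_sub_mul hVc hpos hK hV hg hexp x p)
    fun ω => mul_sub_le_sub_mul_of_nonneg hpos hV hp (x + p) (g ω)

theorem marginalGap_le_mul (x : ℝ) {p : ℝ} (hp : p ≤ 0) :
    marginalGap μ V x g p ≤
      V (x + p) * (p * ∫ ω, exp (-(K * |g ω|)) ∂μ + ∫ ω, |g ω| * exp (K * |g ω|) ∂μ) := by
  have hw := integrable_exp_mul_abs hg hexp (-K)
  have hW := integrable_abs_mul_exp_mul_abs hg hexp K
  simp only [neg_mul] at hw
  rw [← integral_const_mul, ← integral_add (hw.const_mul p) hW, ← integral_const_mul]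
  exact integral_mono (integrable_sub_mul hVc hpos hK hV hg hexp x p)
    (((hw.const_mul p).add hW).const_mul _)
    fun ω => sub_mul_le_mul_add_of_nonpos hpos hV hp (x + p) (g ω)

theorem exists_marginalGap_eq_zero [NeZero μ] (x : ℝ) :
    ∃ p, marginalGap μ V x g p = 0 := by
  set w := ∫ ω, exp (-(K * |g ω|)) ∂μ
  set W := ∫ ω, |g ω| * exp (K * |g ω|) ∂μ
  have hw : 0 < w := integral_exp_pos (by simpa using integrable_exp_mul_abs hg hexp (-K))
  have hW : 0 ≤ W := integral_nonneg fun ω => by positivity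
  set R := W / w + 1
  have hRw : R * w = W + w := by rw [add_mul, div_mul_cancel₀ _ hw.ne', one_mul]
  have hR : 0 ≤ R := by positivity
  have hneg : marginalGap μ V x g (-R) < 0 := by
    refine (marginalGap_le_mul hVc hpos hK hV hg hexp x (neg_nonpos.2 hR)).trans_lt ?_
    exact mul_neg_of_pos_of_neg (hpos _) (by linarith)
  have hposR : 0 < marginalGap μ V x g R := by
    refine lt_of_lt_of_le ?_ (mul_le_marginalGap hVc hpos hK hV hg hexp x hR)
    exact mul_pos (hpos _) (by linarith)
  obtain ⟨p, -, hp⟩ := intermediate_value_Icc (by linarith)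
    (continuousOn_marginalGap hVc hpos hK hV hg hexp x R) ⟨hneg.le, hposR.le⟩
  exact ⟨p, hp⟩

end MarginalGap

theorem stmt4_general {Ω : Type*} [MeasurableSpace Ω] (P : Measure Ω) [IsProbabilityMeasure P]
    (U : ℝ → ℝ) (c₁ c₂ : ℝ) (hc₁ : 0 < c₁)
    (hU : ContDiff ℝ 2 U)
    (hU' : ∀ x, 0 < deriv U x)
    (hbound : ∀ x, c₁ < -(deriv U x / deriv (deriv U) x) ∧
      -(deriv U x / deriv (deriv U) x) < c₂)
    (g : Ω → ℝ) (hgm : Measurable g)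
    (hexp : ∀ r : ℝ, Integrable (fun ω => exp (r * g ω)) P) :
    ∀ x : ℝ, ∃ p : ℝ, ∫ ω, (p - g ω) * deriv U (x + p - g ω) ∂P = 0 := by
  have hV := le_mul_exp_abs_sub_of_abs_deriv_le hU.differentiable_deriv_two hU'
    fun t => abs_le_inv_mul_of_lt_neg_div (hU' t) hc₁ (hbound t).1
  exact exists_marginalGap_eq_zero (hU.continuous_deriv one_le_two) hU' (inv_nonneg.2 hc₁.le)
    hV hgm hexp

/-- existence of a solution `p` of `E[(p - g)·U'(x + p - g)] = 0`
for a utility with bounded absolute risk aversion and a claim `g` with all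
exponential moments. -/
theorem stmt4 {Ω : Type*} [MeasurableSpace Ω] (P : Measure Ω) [IsProbabilityMeasure P]
    (U : ℝ → ℝ) (c₁ c₂ : ℝ) (hc₁ : 0 < c₁) (hc₂ : 0 < c₂)
    (hU : ContDiff ℝ 2 U) (hmono : StrictMono U)
    (hconc : StrictConcaveOn ℝ Set.univ U)
    (hU' : ∀ x, 0 < deriv U x)
    (hbound : ∀ x, c₁ < -(deriv U x / deriv (deriv U) x) ∧
      -(deriv U x / deriv (deriv U) x) < c₂)
    (g : Ω → ℝ) (hgm : Measurable g)
    (hexp : ∀ r : ℝ, Integrable (fun ω => exp (r * g ω)) P) :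
    ∀ x : ℝ, ∃ p : ℝ, ∫ ω, (p - g ω) * deriv U (x + p - g ω) ∂P = 0 :=
  stmt4_general P U c₁ c₂ hc₁ hU hU' hbound g hgm hexp
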